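/- Let p be a prime and k a field of characteristic p. Let A be an associative k-algebra, M an A-module, and let ∂ and h be A-linear endomorphisms of M satisfying ∑_{i=0}^{p−1} ∂^{i} ∘ h ∘ ∂^{p−1−i} = id_M. Then σ := ad_∂^{p−2}(h), where ad_∂(φ) = ∂∘φ − φ∘∂, is an A-linear endomorphism of M satisfying ∂∘σ − σ∘∂ = id_M. (This is the converse direction of the criterion: a null-homotopic p-complex admits σ with [∂,σ] = id.) -/
import Mathlib

theorem ad_iter_expand (S : Type*) [Ring S] (D h : S) (n : ℕ) :
    (fun g : S => D * g - g * D)^[n] h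
      = ∑ m ∈ Finset.range (n+1), ((-1:ℤ)^(n-m) * (n.choose m)) • (D^m * h * D^(n-m)) := by
  have key : ∀ n, (fun g : S => D * g - g * D)^[n] h
      = ((LinearMap.mulLeft ℤ D - LinearMap.mulRight ℤ D)^n) h := by
    intro n
    induction n with
    | zero => simp
    | succ n ih =>
      rw [Function.iterate_succ_apply', ih, pow_succ', Module.End.mul_apply]
      simp
  rw [key]
  have hc : Commute (LinearMap.mulLeft ℤ D) (-(LinearMap.mulRight ℤ D)) :=
    (LinearMap.commute_mulLeft_right D D).neg_right
  have hR : -(LinearMap.mulRight ℤ D) = LinearMap.mulRight ℤ (-D) := by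
    ext g; simp
  rw [sub_eq_add_neg, hc.add_pow, LinearMap.sum_apply]
  refine Finset.sum_congr rfl fun m hm => ?_
  rw [hR, Module.End.mul_apply, Module.End.mul_apply, LinearMap.pow_mulLeft,
    LinearMap.pow_mulRight]
  simp only [Module.End.natCast_apply, LinearMap.mulRight_apply, LinearMap.mulLeft_apply,
    smul_mul_assoc]
  rw [show -D = (-1:ℤ) • D from by simp, smul_pow]
  rw [show ((n.choose m) • (h * ((-1:ℤ)^(n-m) • D^(n-m))) : S)
      = ((n.choose m : ℤ)) • (h * ((-1:ℤ)^(n-m) • D^(n-m))) from (natCast_zsmul _ _).symm]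
  simp only [smul_mul_assoc, mul_smul_comm, smul_smul]
  rw [mul_comm ((n.choose m : ℤ)), mul_assoc]

theorem choose_zmod_aux (p : ℕ) (hp : p.Prime) (m : ℕ) (hm : m ≤ p - 1) :
    (((p-1).choose m : ZMod p)) = (-1)^m := by
  induction m with
  | zero => simp
  | succ m ih =>
    have hm' : m ≤ p - 1 := Nat.le_of_succ_le hm
    have hlt : m + 1 < p := by
      have := hp.one_lt; omega
    have hpas : p.choose (m+1) = (p-1).choose m + (p-1).choose (m+1) := by
      conv_lhs => rw [show p = (p-1)+1 by have := hp.one_lt; omega]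
      exact Nat.choose_succ_succ _ _
    have hdvd : (p : ℕ) ∣ p.choose (m+1) :=
      hp.dvd_choose_self (Nat.succ_ne_zero m) hlt
    have h0 : ((p.choose (m+1) : ZMod p)) = 0 := by
      exact_mod_cast (ZMod.natCast_eq_zero_iff _ _).mpr hdvd
    have h1 := congrArg (Nat.cast : ℕ → ZMod p) hpas
    push_cast at h1
    rw [h0, ih hm'] at h1
    have h2 : ((p-1).choose (m+1) : ZMod p) = -(-1)^m := by linear_combination -h1
    rw [h2, pow_succ]
    ring

theorem zsmul_eq_self_aux {p : ℕ} (k : Type*) [Field k] [CharP k p]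
    (M : Type*) [AddCommGroup M] [Module k M]
    (z : ℤ) (hz : (z : ZMod p) = 1) (x : M) : z • x = x := by
  obtain ⟨t, ht⟩ : (p : ℤ) ∣ (z - 1) := by
    have : ((z - 1 : ℤ) : ZMod p) = 0 := by push_cast [hz]; ring
    exact_mod_cast (ZMod.intCast_zmod_eq_zero_iff_dvd _ _).mp this
  have hz' : z = 1 + p * t := by omega
  have hpx : (p : ℤ) • (t • x) = 0 := by
    rw [natCast_zsmul, ← Nat.cast_smul_eq_nsmul k]
    simp [CharP.cast_eq_zero k p]
  rw [hz', add_smul, mul_smul, hpx, one_smul, add_zero]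

/-- over a field of characteristic `p`, if `∂` and `h` are `A`-linear
endomorphisms of an `A`-module `M` with `∑_{i=0}^{p-1} ∂^i ∘ h ∘ ∂^(p-1-i) = id`, then
`σ := ad_∂^(p-2)(h)` satisfies `∂ ∘ σ - σ ∘ ∂ = id`. -/
theorem stmt_1 (p : ℕ) (hp : p.Prime) (k : Type*) [Field k] [CharP k p]
    (A : Type*) [Ring A] [Algebra k A]
    (M : Type*) [AddCommGroup M] [Module k M] [Module A M] [IsScalarTower k A M]
    (D h : Module.End A M)
    (hh : (Finset.range p).sum (fun i => D ^ i * h * D ^ (p - 1 - i)) = 1) :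
    D * ((fun g : Module.End A M => D * g - g * D)^[p - 2] h)
      - ((fun g : Module.End A M => D * g - g * D)^[p - 2] h) * D = 1 := by
  have hp2 : 2 ≤ p := hp.two_le
  have hstep : D * ((fun g : Module.End A M => D * g - g * D)^[p - 2] h)
      - ((fun g : Module.End A M => D * g - g * D)^[p - 2] h) * D
      = (fun g : Module.End A M => D * g - g * D)^[p - 1] h := by
    rw [show p - 1 = (p - 2) + 1 by omega, Function.iterate_succ_apply']
  rw [hstep, ad_iter_expand, show (p - 1) + 1 = p by omega]
  rw [← hh]
  refine Finset.sum_congr rfl fun m hm => ?_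
  rw [Finset.mem_range] at hm
  have hm1 : m ≤ p - 1 := by omega
  refine zsmul_eq_self_aux (p := p) k _ _ ?_ _
  push_cast
  rw [choose_zmod_aux p hp m hm1, ← pow_add, show p - 1 - m + m = p - 1 by omega]
  rcases hp.eq_two_or_odd' with h2 | hodd
  · subst h2; decide
  · exact (Nat.Odd.sub_odd hodd odd_one).neg_one_pow
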